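/- Let η > 0 and a, m, c, a', m', c' ∈ ℝ. Set N = a − c, D = a − 2m + c, N' = a' − c', D' = a' − 2m' + c'. Suppose |a − a'| ≤ ε, |m − m'| ≤ ε, |c − c'| ≤ ε, and |D| ≥ δ > 4ε. Then the perturbed learning-rate estimate satisfies |(η/2)·N'/D' − (η/2)·N/D| ≤ (η/2)·(2ε + 4ε|N|/δ)/(δ − 4ε). -/

import Mathlib

/-! Writing `N / D` for the estimate and `N' / D'` for its perturbation,
`N'/D' - N/D = (N' - N)/D' + N (D - D')/(D D')`. The numerators move by at most `2ε` and the
denominators by at most `4ε`, so `|D'| ≥ δ - 4ε > 0` and each of the two terms is bounded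
directly. -/

theorem abs_div_sub_div_le_of_abs_sub_le {N N' D D' α β δ : ℝ}
    (hN : |N' - N| ≤ α) (hD : |D - D'| ≤ β) (hδD : δ ≤ |D|) (hβδ : β < δ) :
    |N' / D' - N / D| ≤ (α + β * |N| / δ) / (δ - β) := by
  have hβ : 0 ≤ β := (abs_nonneg _).trans hD
  have hδ : 0 < δ := hβ.trans_lt hβδ
  have hD'_lb : δ - β ≤ |D'| := by linarith [abs_sub_abs_le_abs_sub D D']
  have hD_ne : D ≠ 0 := abs_pos.mp (hδ.trans_le hδD)
  have hD'_ne : D' ≠ 0 := abs_pos.mp ((sub_pos.mpr hβδ).trans_le hD'_lb)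
  have split : N' / D' - N / D = (N' - N) / D' + N * (D - D') / (D * D') := by
    field_simp
    ring
  have numerator_term : |(N' - N) / D'| ≤ α / (δ - β) := by
    rw [abs_div]
    exact div_le_div₀ ((abs_nonneg _).trans hN) hN (by linarith) hD'_lb
  have denominator_term : |N * (D - D') / (D * D')| ≤ β * |N| / δ / (δ - β) := by
    rw [abs_div, abs_mul, abs_mul, div_div, mul_comm β]
    gcongr
  calc |N' / D' - N / D|
      ≤ |(N' - N) / D'| + |N * (D - D') / (D * D')| := split ▸ abs_add_le _ _
    _ ≤ α / (δ - β) + β * |N| / δ / (δ - β) := add_le_add numerator_term denominator_term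
    _ = (α + β * |N| / δ) / (δ - β) := by ring

theorem abs_centralDifference_sub_le {a c a' c' ε : ℝ} (ha : |a - a'| ≤ ε) (hc : |c - c'| ≤ ε) :
    |(a' - c') - (a - c)| ≤ 2 * ε := by
  calc |(a' - c') - (a - c)| = |(c - c') - (a - a')| := by ring_nf
    _ ≤ |c - c'| + |a - a'| := abs_sub _ _
    _ ≤ 2 * ε := by linarith

theorem abs_secondDifference_sub_le {a m c a' m' c' ε : ℝ}
    (ha : |a - a'| ≤ ε) (hm : |m - m'| ≤ ε) (hc : |c - c'| ≤ ε) :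
    |(a - 2 * m + c) - (a' - 2 * m' + c')| ≤ 4 * ε := by
  calc |(a - 2 * m + c) - (a' - 2 * m' + c')| = |(a - a') + (-2) * (m - m') + (c - c')| := by
        ring_nf
    _ ≤ |a - a'| + |(-2) * (m - m')| + |c - c'| := abs_add_three _ _ _
    _ ≤ 4 * ε := by rw [abs_mul, abs_neg, abs_two]; linarith

/-- Deterministic stability of the learning-rate estimate
`η* = (η/2)·N/D` under perturbations of the three loss values by at most
`ε`, provided the denominator is bounded below by `δ > 4ε`. -/
theorem lr_estimate_stability (η a m c a' m' c' ε δ : ℝ) (hη : 0 < η)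
    (ha : |a - a'| ≤ ε) (hm : |m - m'| ≤ ε) (hc : |c - c'| ≤ ε)
    (hD : δ ≤ |a - 2 * m + c|) (hδ : 4 * ε < δ) :
    |η / 2 * ((a' - c') / (a' - 2 * m' + c'))
      - η / 2 * ((a - c) / (a - 2 * m + c))|
      ≤ η / 2 * ((2 * ε + 4 * ε * |a - c| / δ) / (δ - 4 * ε)) := by
  rw [← mul_sub, abs_mul, abs_of_pos (half_pos hη)]
  gcongr
  exact abs_div_sub_div_le_of_abs_sub_le (abs_centralDifference_sub_le ha hc)
    (abs_secondDifference_sub_le ha hm hc) hD hδ
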